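/- Let T(N,K) satisfy T(N,K) ≤ L if N ≤ K, and T(N,K) ≤ ⌈N/K⌉·L + T(⌈N/K⌉, K) if N > K, for a constant L > 0 and integer K ≥ 2. Then T(N,K) ≤ (N/(K−1) + ⌈log_K N⌉ + 1)·L for all N ≥ 1. -/
import Mathlib

/-- Solving the DCI latency recurrence: if `T(n) ≤ L` for `n ≤ K` and
`T(n) ≤ ⌈n/K⌉·L + T(⌈n/K⌉)` for `n > K`, then
`T(N) ≤ (N/(K-1) + ⌈log_K N⌉ + 1)·L` for all `N ≥ 1`. -/
theorem dci_recurrence_bound (K : ℕ) (hK : 2 ≤ K) (L : ℝ) (hL : 0 < L)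
    (T : ℕ → ℝ)
    (hbase : ∀ n, n ≤ K → T n ≤ L)
    (hrec : ∀ n, K < n →
      T n ≤ (((n + K - 1) / K : ℕ) : ℝ) * L + T ((n + K - 1) / K)) :
    ∀ N, 1 ≤ N →
      T N ≤ ((N : ℝ) / ((K : ℝ) - 1) + (Nat.clog K N : ℝ) + 1) * L := by
  have hK1 : (1 : ℝ) < (K : ℝ) := by exact_mod_cast lt_of_lt_of_le one_lt_two hK
  have hKpos : (0 : ℝ) < (K : ℝ) - 1 := by linarith
  intro N
  induction N using Nat.strong_induction_on with
  | _ n ih =>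
    intro hn1
    by_cases hc : n ≤ K
    · calc T n ≤ L := hbase n hc
        _ = 1 * L := (one_mul L).symm
        _ ≤ ((n : ℝ) / ((K : ℝ) - 1) + (Nat.clog K n : ℝ) + 1) * L := by
            apply mul_le_mul_of_nonneg_right _ hL.le
            have h1 : (0:ℝ) ≤ (n : ℝ) / ((K : ℝ) - 1) :=
              div_nonneg (Nat.cast_nonneg n) hKpos.le
            have h2 : (0:ℝ) ≤ (Nat.clog K n : ℝ) := Nat.cast_nonneg _
            linarith
    · push_neg at hc
      set m := (n + K - 1) / K with hm
      have hm1 : 1 ≤ m := by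
        apply Nat.one_le_div_iff (by omega) |>.2
        omega
      have hmKn : m * K ≤ n + K - 1 := Nat.div_mul_le_self _ _
      have hmn : m < n := by
        have h2n : n + K + 1 ≤ 2 * n := by omega
        have : 2 * n ≤ n * K := by nlinarith
        have : n + K - 1 < n * K := by omega
        apply Nat.div_lt_of_lt_mul
        rw [Nat.mul_comm]
        omega
      have hclog : Nat.clog K n = Nat.clog K m + 1 :=
        Nat.clog_of_two_le (by omega) (by omega)
      have ihm := ih m hmn hm1
      have h1 := hrec n hc
      rw [← hm] at h1
      have key : (m : ℝ) + ((m : ℝ) / ((K : ℝ) - 1) + (Nat.clog K m : ℝ) + 1)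
          ≤ (n : ℝ) / ((K : ℝ) - 1) + (Nat.clog K n : ℝ) + 1 := by
        rw [hclog]
        push_cast
        have hmKnR : (m : ℝ) * (K : ℝ) ≤ (n : ℝ) + (K : ℝ) - 1 := by
          have : ((m * K : ℕ) : ℝ) ≤ ((n + K - 1 : ℕ) : ℝ) := by exact_mod_cast hmKn
          push_cast [Nat.cast_sub (by omega : 1 ≤ n + K)] at this
          linarith
        have e1 : (m:ℝ) + (m:ℝ)/((K:ℝ)-1) = (m:ℝ)*(K:ℝ)/((K:ℝ)-1) := by
          field_simp; ring
        have e2 : (n:ℝ)/((K:ℝ)-1) + 1 = ((n:ℝ)+(K:ℝ)-1)/((K:ℝ)-1) := by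
          field_simp; ring
        have e3 : (m:ℝ)*(K:ℝ)/((K:ℝ)-1) ≤ ((n:ℝ)+(K:ℝ)-1)/((K:ℝ)-1) :=
          div_le_div_of_nonneg_right hmKnR hKpos.le
        linarith
      calc T n ≤ (m : ℝ) * L + T m := h1
        _ ≤ (m : ℝ) * L + ((m : ℝ) / ((K : ℝ) - 1) + (Nat.clog K m : ℝ) + 1) * L := by
            linarith
        _ = ((m : ℝ) + ((m : ℝ) / ((K : ℝ) - 1) + (Nat.clog K m : ℝ) + 1)) * L := by ring
        _ ≤ ((n : ℝ) / ((K : ℝ) - 1) + (Nat.clog K n : ℝ) + 1) * L :=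
            mul_le_mul_of_nonneg_right key hL.le
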